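/- arXiv:0904.3573 — 5 statements merged into one kernel-verified Lean document; each statement's English description precedes it below -/
import Mathlib

section
/- Let n ≥ 3 and C ≥ 0 be natural numbers. Then the set of finite multisets s of positive natural numbers satisfying ∑_{x ∈ s} (n·x − 1) ≤ C has cardinality at most the number of partitions of C (the cardinality of Nat.Partition C). -/
/-!
Every part `n * x - 1` of `s.map (n * · - 1)` is at least `2`, so padding this multiset with ones
up to total `C` gives a partition of `C` from which it is recovered as the parts `≥ 2`; since
`x ↦ n * x - 1` is injective, `s` is recovered as well.
-/

open Function

namespace Multiset

/-- No padding happens when `C ≤ t.sum`. -/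
def padWithOnes (C : ℕ) (t : Multiset ℕ) : Multiset ℕ :=
  t + replicate (C - t.sum) 1

theorem sum_padWithOnes {C : ℕ} {t : Multiset ℕ} (h : t.sum ≤ C) :
    (padWithOnes C t).sum = C := by
  simp only [padWithOnes, sum_add, sum_replicate, smul_eq_mul, mul_one]
  omega

theorem filter_two_le_padWithOnes {C : ℕ} {t : Multiset ℕ} (ht : ∀ y ∈ t, 2 ≤ y) :
    (padWithOnes C t).filter (2 ≤ ·) = t := by
  rw [padWithOnes, filter_add, filter_eq_self.mpr ht, filter_eq_nil.mpr, add_zero]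
  intro y hy
  rw [eq_of_mem_replicate hy]
  omega

theorem injOn_padWithOnes (C : ℕ) : Set.InjOn (padWithOnes C) {t | ∀ y ∈ t, 2 ≤ y} :=
  fun s hs t ht h => by rw [← filter_two_le_padWithOnes hs, ← filter_two_le_padWithOnes ht, h]

end Multiset

theorem Nat.Partition.parts_injective (C : ℕ) : Injective (Nat.Partition.parts (n := C)) :=
  fun _ _ h => Nat.Partition.ext h

theorem Nat.Partition.mem_range_parts_iff {C : ℕ} {p : Multiset ℕ} :
    p ∈ Set.range (Nat.Partition.parts (n := C)) ↔ (∀ x ∈ p, 0 < x) ∧ p.sum = C :=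
  ⟨by rintro ⟨q, rfl⟩; exact ⟨fun _ hx => q.parts_pos hx, q.parts_sum⟩,
    fun ⟨hpos, hsum⟩ => ⟨⟨p, fun hx => hpos _ hx, hsum⟩, rfl⟩⟩

theorem ncard_setOf_map_sum_le_card_partition {f : ℕ → ℕ} (hf : Injective f)
    (hf_two_le : ∀ x, 0 < x → 2 ≤ f x) (C : ℕ) :
    {s : Multiset ℕ | (∀ x ∈ s, 0 < x) ∧ (s.map f).sum ≤ C}.ncard ≤
      Fintype.card (Nat.Partition C) := by
  set S := {s : Multiset ℕ | (∀ x ∈ s, 0 < x) ∧ (s.map f).sum ≤ C}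
  have two_le : ∀ s ∈ S, ∀ y ∈ s.map f, 2 ≤ y := by
    intro s hs y hy
    obtain ⟨x, hx, rfl⟩ := Multiset.mem_map.mp hy
    exact hf_two_le x (hs.1 x hx)
  have maps_to : ∀ s ∈ S,
      Multiset.padWithOnes C (s.map f) ∈ Set.range (Nat.Partition.parts (n := C)) := by
    intro s hs
    refine Nat.Partition.mem_range_parts_iff.mpr ⟨fun y hy => ?_, Multiset.sum_padWithOnes hs.2⟩
    rcases Multiset.mem_add.mp hy with hy | hy
    · exact lt_of_lt_of_le two_pos (two_le s hs y hy)
    · rw [Multiset.eq_of_mem_replicate hy]; exact one_pos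
  have inj_on : Set.InjOn (fun s => Multiset.padWithOnes C (s.map f)) S :=
    fun s hs t ht h =>
      Multiset.map_injective hf (Multiset.injOn_padWithOnes C (two_le s hs) (two_le t ht) h)
  calc S.ncard ≤ (Set.range (Nat.Partition.parts (n := C))).ncard :=
        Set.ncard_le_ncard_of_injOn _ maps_to inj_on (Set.finite_range _)
    _ = Fintype.card (Nat.Partition C) := by
        rw [Set.ncard_range_of_injective (Nat.Partition.parts_injective C),
          Nat.card_eq_fintype_card]

theorem strictMono_mul_sub_one {n : ℕ} (hn : 2 ≤ n) : StrictMono (fun x : ℕ => n * x - 1) :=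
  strictMono_nat_of_lt_succ fun x => by rw [Nat.mul_succ]; omega

theorem ramification_profiles_card_le_partitions (n C : ℕ) (hn : 3 ≤ n) :
    {s : Multiset ℕ | (∀ x ∈ s, 0 < x) ∧
      (s.map (fun x => n * x - 1)).sum ≤ C}.ncard ≤ Fintype.card (Nat.Partition C) := by
  refine ncard_setOf_map_sum_le_card_partition (strictMono_mul_sub_one (by omega)).injective
    (fun x hx => ?_) C
  have := Nat.mul_le_mul_left n hx
  omega
end

section
/- Identify ℝ² with ℂ (with basis e₁ = 1, e₂ = i) and let F = ℂⁿ regarded as a real normed space. Let J : F → (F →L[ℝ] F) be a smooth map with J(u(0)) equal to scalar multiplication by i, and let u be a smooth F-valued map on a neighborhood U of 0 in ℂ satisfying fderiv ℝ u z e₁ + J(u z)(fderiv ℝ u z e₂) = 0 for all z ∈ U. Assume iteratedFDeriv ℝ j u 0 = 0 for all 1 ≤ j ≤ k. Then iteratedFDeriv ℝ (k+1) u 0 = 0 if and only if iteratedFDeriv ℝ (k+1) u 0 evaluated on the constant tuple (1,…,1) (k+1 copies of 1 ∈ ℂ ≅ ℝ²) equals 0. -/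
open Complex Set Function

section helpers

variable {s : Set ℂ}

private lemma natCast_le_infty (i : ℕ) : (i : WithTop ℕ∞) ≤ ((⊤ : ℕ∞) : WithTop ℕ∞) := by
  exact_mod_cast le_top

private lemma one_le_infty : (1 : WithTop ℕ∞) ≤ ((⊤ : ℕ∞) : WithTop ℕ∞) := by
  have h : ((1 : ℕ) : WithTop ℕ∞) ≤ ((⊤ : ℕ∞) : WithTop ℕ∞) := natCast_le_infty 1
  simpa using h

private lemma two_le_infty : (2 : WithTop ℕ∞) ≤ ((⊤ : ℕ∞) : WithTop ℕ∞) := by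
  have h : ((2 : ℕ) : WithTop ℕ∞) ≤ ((⊤ : ℕ∞) : WithTop ℕ∞) := natCast_le_infty 2
  simpa using h

lemma compLeftIter {X Y : Type*} [NormedAddCommGroup X] [NormedSpace ℝ X]
    [NormedAddCommGroup Y] [NormedSpace ℝ Y] (hs : IsOpen s) (L : X →L[ℝ] Y)
    {f : ℂ → X} (hf : ContDiffOn ℝ (⊤ : ℕ∞) f s) {x : ℂ} (hx : x ∈ s) (j : ℕ) :
    iteratedFDeriv ℝ j (fun z => L (f z)) x
      = L.compContinuousMultilinearMap (iteratedFDeriv ℝ j f x) := by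
  rw [← iteratedFDerivWithin_of_isOpen j hs hx (f := fun z => L (f z)),
      ← iteratedFDerivWithin_of_isOpen j hs hx (f := f)]
  exact L.iteratedFDerivWithin_comp_left (hf x hx) hs.uniqueDiffOn hx (natCast_le_infty j)

lemma applyIter {X : Type*} [NormedAddCommGroup X] [NormedSpace ℝ X] (hs : IsOpen s)
    {f : ℂ → (ℂ →L[ℝ] X)} (hf : ContDiffOn ℝ (⊤ : ℕ∞) f s) {x : ℂ} (hx : x ∈ s) (j : ℕ)
    (v : ℂ) (m : Fin j → ℂ) :
    iteratedFDeriv ℝ j (fun z => f z v) x m = iteratedFDeriv ℝ j f x m v := by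
  have h := compLeftIter hs (ContinuousLinearMap.apply ℝ X v) hf hx j
  simp only [ContinuousLinearMap.apply_apply] at h
  rw [h]
  rfl

lemma stepIter {X : Type*} [NormedAddCommGroup X] [NormedSpace ℝ X] (hs : IsOpen s)
    {f : ℂ → X} (hf : ContDiffOn ℝ (⊤ : ℕ∞) f s) {x : ℂ} (hx : x ∈ s) (j : ℕ)
    (v : ℂ) (m : Fin j → ℂ) :
    iteratedFDeriv ℝ j (fun z => fderiv ℝ f z v) x m
      = iteratedFDeriv ℝ (j + 1) f x (Fin.snoc m v) := by
  have hdf : ContDiffOn ℝ (⊤ : ℕ∞) (fderiv ℝ f) s :=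
    ((contDiffOn_infty_iff_fderiv_of_isOpen hs).1 hf).2
  rw [applyIter hs hdf hx j v m, iteratedFDeriv_succ_apply_right, Fin.init_snoc, Fin.snoc_last]

lemma fderivJetZero {X : Type*} [NormedAddCommGroup X] [NormedSpace ℝ X]
    {g : ℂ → X} {i : ℕ} (h : iteratedFDeriv ℝ (i + 1) g 0 = 0) :
    iteratedFDeriv ℝ i (fderiv ℝ g) 0 = 0 := by
  ext m v
  have h2 : iteratedFDeriv ℝ (i + 1) g 0 (Fin.snoc m v) = 0 := by rw [h]; rfl
  rw [iteratedFDeriv_succ_apply_right, Fin.init_snoc, Fin.snoc_last] at h2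
  simpa using h2

end helpers

section leibniz

noncomputable def flipCLM (Y Z : Type) [NormedAddCommGroup Y] [NormedSpace ℝ Y]
    [NormedAddCommGroup Z] [NormedSpace ℝ Z] :
    (ℂ →L[ℝ] (Y →L[ℝ] Z)) →L[ℝ] (Y →L[ℝ] (ℂ →L[ℝ] Z)) :=
  (ContinuousLinearMap.flipₗᵢ ℝ ℂ Y Z).toContinuousLinearEquiv.toContinuousLinearMap

set_option maxHeartbeats 2000000 in
lemma clmApplyJetZero {s : Set ℂ} (hs : IsOpen s) (h0 : (0 : ℂ) ∈ s) :
    ∀ (j : ℕ) {Y Z : Type} [NormedAddCommGroup Y] [NormedSpace ℝ Y]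
      [NormedAddCommGroup Z] [NormedSpace ℝ Z]
      (c : ℂ → (Y →L[ℝ] Z)) (g : ℂ → Y),
      ContDiffOn ℝ (⊤ : ℕ∞) c s → ContDiffOn ℝ (⊤ : ℕ∞) g s →
      (∀ i, i ≤ j → iteratedFDeriv ℝ i g 0 = 0) →
      iteratedFDeriv ℝ j (fun z => c z (g z)) 0 = 0 := by
  intro j
  induction j with
  | zero =>
    intro Y Z _ _ _ _ c g hc hg hjets
    ext m
    have hg0 : g 0 = 0 := by
      have h := hjets 0 le_rfl
      have h2 : iteratedFDeriv ℝ 0 g 0 m = 0 := by rw [h]; rfl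
      rwa [iteratedFDeriv_zero_apply] at h2
    simp [iteratedFDeriv_zero_apply, hg0]
  | succ j ih =>
    intro Y Z _ _ _ _ c g hc hg hjets
    have hc' : ContDiffOn ℝ (⊤ : ℕ∞) (fderiv ℝ c) s :=
      ((contDiffOn_infty_iff_fderiv_of_isOpen hs).1 hc).2
    have hg' : ContDiffOn ℝ (⊤ : ℕ∞) (fderiv ℝ g) s :=
      ((contDiffOn_infty_iff_fderiv_of_isOpen hs).1 hg).2
    have hC1 : ContDiffOn ℝ (⊤ : ℕ∞)
        (fun z => (ContinuousLinearMap.compL ℝ ℂ Y Z) (c z)) s :=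
      contDiffOn_const.clm_apply hc
    have hC2 : ContDiffOn ℝ (⊤ : ℕ∞) (fun z => flipCLM Y Z (fderiv ℝ c z)) s :=
      contDiffOn_const.clm_apply hc'
    have hφ₁s : ContDiffOn ℝ (⊤ : ℕ∞)
        (fun z => (ContinuousLinearMap.compL ℝ ℂ Y Z) (c z) (fderiv ℝ g z)) s :=
      hC1.clm_apply hg'
    have hφ₂s : ContDiffOn ℝ (⊤ : ℕ∞) (fun z => flipCLM Y Z (fderiv ℝ c z) (g z)) s :=
      hC2.clm_apply hg
    have heq : Set.EqOn (fderiv ℝ (fun z => c z (g z)))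
        (fun z => (ContinuousLinearMap.compL ℝ ℂ Y Z) (c z) (fderiv ℝ g z)
          + flipCLM Y Z (fderiv ℝ c z) (g z)) s := by
      intro z hz
      have hzn := hs.mem_nhds hz
      have hdc : DifferentiableAt ℝ c z := (hc.contDiffAt hzn).differentiableAt (by simp)
      have hdg : DifferentiableAt ℝ g z := (hg.contDiffAt hzn).differentiableAt (by simp)
      rw [fderiv_clm_apply hdc hdg]
      rfl
    have key : iteratedFDeriv ℝ j (fderiv ℝ (fun z => c z (g z))) 0 = 0 := by
      rw [← iteratedFDerivWithin_of_isOpen j hs h0,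
          iteratedFDerivWithin_congr heq h0,
          iteratedFDerivWithin_of_isOpen j hs h0]
      have h1 : iteratedFDeriv ℝ j
          (fun z => (ContinuousLinearMap.compL ℝ ℂ Y Z) (c z) (fderiv ℝ g z)) 0 = 0 := by
        apply ih (fun z => (ContinuousLinearMap.compL ℝ ℂ Y Z) (c z)) (fderiv ℝ g) hC1 hg'
        intro i hi
        exact fderivJetZero (hjets (i + 1) (by omega))
      have h2 : iteratedFDeriv ℝ j
          (fun z => flipCLM Y Z (fderiv ℝ c z) (g z)) 0 = 0 := by
        apply ih (fun z => flipCLM Y Z (fderiv ℝ c z)) g hC2 hg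
        intro i hi
        exact hjets i (by omega)
      ext m
      have hsum : iteratedFDeriv ℝ j
          (fun z => (ContinuousLinearMap.compL ℝ ℂ Y Z) (c z) (fderiv ℝ g z)
            + flipCLM Y Z (fderiv ℝ c z) (g z)) 0 m
          = iteratedFDeriv ℝ j
              (fun z => (ContinuousLinearMap.compL ℝ ℂ Y Z) (c z) (fderiv ℝ g z)) 0 m
            + iteratedFDeriv ℝ j (fun z => flipCLM Y Z (fderiv ℝ c z) (g z)) 0 m := by
        rw [← iteratedFDerivWithin_of_isOpen j hs h0
              (f := fun z => (ContinuousLinearMap.compL ℝ ℂ Y Z) (c z) (fderiv ℝ g z)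
                + flipCLM Y Z (fderiv ℝ c z) (g z)),
            ← iteratedFDerivWithin_of_isOpen j hs h0
              (f := fun z => (ContinuousLinearMap.compL ℝ ℂ Y Z) (c z) (fderiv ℝ g z)),
            ← iteratedFDerivWithin_of_isOpen j hs h0
              (f := fun z => flipCLM Y Z (fderiv ℝ c z) (g z)),
            iteratedFDerivWithin_add_apply' (hφ₁s.of_le (natCast_le_infty j) 0 h0)
              (hφ₂s.of_le (natCast_le_infty j) 0 h0) hs.uniqueDiffOn h0]
        rfl
      rw [hsum, h1, h2]
      simp
    ext m
    rw [iteratedFDeriv_succ_apply_right, key]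
    simp

set_option maxHeartbeats 2000000 in
lemma clmApplyJetZero' {s : Set ℂ} (hs : IsOpen s) (h0 : (0 : ℂ) ∈ s) :
    ∀ (j : ℕ) {Y Z : Type} [NormedAddCommGroup Y] [NormedSpace ℝ Y]
      [NormedAddCommGroup Z] [NormedSpace ℝ Z]
      (c : ℂ → (Y →L[ℝ] Z)) (g : ℂ → Y),
      ContDiffOn ℝ (⊤ : ℕ∞) c s → ContDiffOn ℝ (⊤ : ℕ∞) g s →
      c 0 = 0 →
      (∀ i, i < j → iteratedFDeriv ℝ i g 0 = 0) →
      iteratedFDeriv ℝ j (fun z => c z (g z)) 0 = 0 := by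
  intro j
  induction j with
  | zero =>
    intro Y Z _ _ _ _ c g hc hg hc0 hjets
    ext m
    simp [iteratedFDeriv_zero_apply, hc0]
  | succ j ih =>
    intro Y Z _ _ _ _ c g hc hg hc0 hjets
    have hc' : ContDiffOn ℝ (⊤ : ℕ∞) (fderiv ℝ c) s :=
      ((contDiffOn_infty_iff_fderiv_of_isOpen hs).1 hc).2
    have hg' : ContDiffOn ℝ (⊤ : ℕ∞) (fderiv ℝ g) s :=
      ((contDiffOn_infty_iff_fderiv_of_isOpen hs).1 hg).2
    have hC1 : ContDiffOn ℝ (⊤ : ℕ∞)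
        (fun z => (ContinuousLinearMap.compL ℝ ℂ Y Z) (c z)) s :=
      contDiffOn_const.clm_apply hc
    have hC2 : ContDiffOn ℝ (⊤ : ℕ∞) (fun z => flipCLM Y Z (fderiv ℝ c z)) s :=
      contDiffOn_const.clm_apply hc'
    have hφ₁s : ContDiffOn ℝ (⊤ : ℕ∞)
        (fun z => (ContinuousLinearMap.compL ℝ ℂ Y Z) (c z) (fderiv ℝ g z)) s :=
      hC1.clm_apply hg'
    have hφ₂s : ContDiffOn ℝ (⊤ : ℕ∞) (fun z => flipCLM Y Z (fderiv ℝ c z) (g z)) s :=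
      hC2.clm_apply hg
    have heq : Set.EqOn (fderiv ℝ (fun z => c z (g z)))
        (fun z => (ContinuousLinearMap.compL ℝ ℂ Y Z) (c z) (fderiv ℝ g z)
          + flipCLM Y Z (fderiv ℝ c z) (g z)) s := by
      intro z hz
      have hzn := hs.mem_nhds hz
      have hdc : DifferentiableAt ℝ c z := (hc.contDiffAt hzn).differentiableAt (by simp)
      have hdg : DifferentiableAt ℝ g z := (hg.contDiffAt hzn).differentiableAt (by simp)
      rw [fderiv_clm_apply hdc hdg]
      rfl
    have key : iteratedFDeriv ℝ j (fderiv ℝ (fun z => c z (g z))) 0 = 0 := by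
      rw [← iteratedFDerivWithin_of_isOpen j hs h0,
          iteratedFDerivWithin_congr heq h0,
          iteratedFDerivWithin_of_isOpen j hs h0]
      have h1 : iteratedFDeriv ℝ j
          (fun z => (ContinuousLinearMap.compL ℝ ℂ Y Z) (c z) (fderiv ℝ g z)) 0 = 0 := by
        apply ih (fun z => (ContinuousLinearMap.compL ℝ ℂ Y Z) (c z)) (fderiv ℝ g) hC1 hg'
        · rw [hc0]; simp
        · intro i hi
          exact fderivJetZero (hjets (i + 1) (by omega))
      have h2 : iteratedFDeriv ℝ j
          (fun z => flipCLM Y Z (fderiv ℝ c z) (g z)) 0 = 0 := by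
        apply clmApplyJetZero hs h0 j (fun z => flipCLM Y Z (fderiv ℝ c z)) g hC2 hg
        intro i hi
        exact hjets i (by omega)
      ext m
      have hsum : iteratedFDeriv ℝ j
          (fun z => (ContinuousLinearMap.compL ℝ ℂ Y Z) (c z) (fderiv ℝ g z)
            + flipCLM Y Z (fderiv ℝ c z) (g z)) 0 m
          = iteratedFDeriv ℝ j
              (fun z => (ContinuousLinearMap.compL ℝ ℂ Y Z) (c z) (fderiv ℝ g z)) 0 m
            + iteratedFDeriv ℝ j (fun z => flipCLM Y Z (fderiv ℝ c z) (g z)) 0 m := by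
        rw [← iteratedFDerivWithin_of_isOpen j hs h0
              (f := fun z => (ContinuousLinearMap.compL ℝ ℂ Y Z) (c z) (fderiv ℝ g z)
                + flipCLM Y Z (fderiv ℝ c z) (g z)),
            ← iteratedFDerivWithin_of_isOpen j hs h0
              (f := fun z => (ContinuousLinearMap.compL ℝ ℂ Y Z) (c z) (fderiv ℝ g z)),
            ← iteratedFDerivWithin_of_isOpen j hs h0
              (f := fun z => flipCLM Y Z (fderiv ℝ c z) (g z)),
            iteratedFDerivWithin_add_apply' (hφ₁s.of_le (natCast_le_infty j) 0 h0)
              (hφ₂s.of_le (natCast_le_infty j) 0 h0) hs.uniqueDiffOn h0]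
        rfl
      rw [hsum, h1, h2]
      simp
    ext m
    rw [iteratedFDeriv_succ_apply_right, key]
    simp

end leibniz

section main

variable {n k : ℕ} {J : (Fin n → ℂ) → ((Fin n → ℂ) →L[ℝ] (Fin n → ℂ))}
  {u : ℂ → (Fin n → ℂ)} {s : Set ℂ}

noncomputable def dchain (u : ℂ → (Fin n → ℂ)) : List ℂ → ℂ → (Fin n → ℂ)
  | [] => u
  | v :: vs => fun z => fderiv ℝ (dchain u vs) z v

lemma dchain_nil : dchain u [] = u := rfl

lemma dchain_cons {v : ℂ} {vs : List ℂ} :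
    dchain u (v :: vs) = fun z => fderiv ℝ (dchain u vs) z v := rfl

lemma dchain_smooth (hs : IsOpen s) (hu : ContDiffOn ℝ (⊤ : ℕ∞) u s) :
    ∀ vs : List ℂ, ContDiffOn ℝ (⊤ : ℕ∞) (dchain u vs) s
  | [] => hu
  | v :: vs => by
    rw [dchain_cons]
    exact (((contDiffOn_infty_iff_fderiv_of_isOpen hs).1
      (dchain_smooth hs hu vs)).2).clm_apply contDiffOn_const

lemma dchain_jets (hs : IsOpen s) (h0 : (0 : ℂ) ∈ s) (hu : ContDiffOn ℝ (⊤ : ℕ∞) u s)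
    (hjet : ∀ j : ℕ, 1 ≤ j → j ≤ k → iteratedFDeriv ℝ j u 0 = 0) :
    ∀ (vs : List ℂ) (i : ℕ), 1 ≤ i + vs.length → i + vs.length ≤ k →
      iteratedFDeriv ℝ i (dchain u vs) 0 = 0
  | [], i, h1, h2 => hjet i (by simpa using h1) (by simpa using h2)
  | v :: vs, i, h1, h2 => by
    ext m
    rw [dchain_cons, stepIter hs (dchain_smooth hs hu vs) h0 i v m,
      dchain_jets hs h0 hu hjet vs (i + 1) (by omega) (by simp at h2 ⊢; omega)]
    simp

set_option maxHeartbeats 4000000 in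
lemma eKey (hs : IsOpen s) (h0 : (0 : ℂ) ∈ s) (hu : ContDiffOn ℝ (⊤ : ℕ∞) u s)
    (hJs : ContDiffOn ℝ (⊤ : ℕ∞) (fun z => J (u z)) s)
    (hCR : ∀ z ∈ s, fderiv ℝ u z 1 + J (u z) (fderiv ℝ u z Complex.I) = 0)
    (hjet : ∀ j : ℕ, 1 ≤ j → j ≤ k → iteratedFDeriv ℝ j u 0 = 0) :
    ∀ (vs : List ℂ) (j : ℕ), j + vs.length ≤ k →
      iteratedFDeriv ℝ j
        (fun z => fderiv ℝ (dchain u vs) z 1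
          + J (u z) (fderiv ℝ (dchain u vs) z Complex.I)) 0 = 0 := by
  intro vs
  induction vs with
  | nil =>
    intro j hj
    have heq : Set.EqOn
        (fun z => fderiv ℝ (dchain u []) z 1 + J (u z) (fderiv ℝ (dchain u []) z Complex.I))
        (fun _ => (0 : Fin n → ℂ)) s := by
      intro z hz
      exact hCR z hz
    rw [← iteratedFDerivWithin_of_isOpen j hs h0, iteratedFDerivWithin_congr heq h0,
      iteratedFDerivWithin_of_isOpen j hs h0]
    exact congrFun iteratedFDeriv_zero_fun 0
  | cons v vs ih =>
    intro j hj
    simp only [List.length_cons] at hj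
    -- notation
    have hW : ContDiffOn ℝ (⊤ : ℕ∞) (dchain u vs) s := dchain_smooth hs hu vs
    have hW' : ContDiffOn ℝ (⊤ : ℕ∞) (fderiv ℝ (dchain u vs)) s :=
      ((contDiffOn_infty_iff_fderiv_of_isOpen hs).1 hW).2
    have hA1 : ContDiffOn ℝ (⊤ : ℕ∞) (dchain u ((1 : ℂ) :: vs)) s :=
      dchain_smooth hs hu ((1 : ℂ) :: vs)
    have hAI : ContDiffOn ℝ (⊤ : ℕ∞) (dchain u (Complex.I :: vs)) s :=
      dchain_smooth hs hu (Complex.I :: vs)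
    have hψ : ContDiffOn ℝ (⊤ : ℕ∞)
        (fun z => fderiv ℝ (dchain u vs) z 1
          + J (u z) (fderiv ℝ (dchain u vs) z Complex.I)) s :=
      (hW'.clm_apply contDiffOn_const).add (hJs.clm_apply (hW'.clm_apply contDiffOn_const))
    have hJu' : ContDiffOn ℝ (⊤ : ℕ∞) (fderiv ℝ (fun z => J (u z))) s :=
      ((contDiffOn_infty_iff_fderiv_of_isOpen hs).1 hJs).2
    have hcterm : ContDiffOn ℝ (⊤ : ℕ∞) (fun z => fderiv ℝ (fun y => J (u y)) z v) s :=
      hJu'.clm_apply contDiffOn_const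
    -- symmetry of second derivative of dchain u vs
    have stepA : ∀ a b : ℂ, ∀ z ∈ s,
        fderiv ℝ (fun y => fderiv ℝ (dchain u vs) y a) z b
          = fderiv ℝ (fun y => fderiv ℝ (dchain u vs) y b) z a := by
      intro a b z hz
      have hzn := hs.mem_nhds hz
      have hdW' : DifferentiableAt ℝ (fderiv ℝ (dchain u vs)) z :=
        (hW'.contDiffAt hzn).differentiableAt (by simp)
      have e : ∀ c : ℂ, fderiv ℝ (fun y => fderiv ℝ (dchain u vs) y c) z
          = (fderiv ℝ (fderiv ℝ (dchain u vs)) z).flip c := by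
        intro c
        rw [fderiv_clm_apply hdW' (differentiableAt_const c)]
        simp
      rw [e a, e b]
      simp only [ContinuousLinearMap.flip_apply]
      exact ((hW.contDiffAt hzn).isSymmSndFDerivAt (by simpa using two_le_infty)).eq b a
    -- the key pointwise identity on s
    have heqG : Set.EqOn
        (fun z => (fderiv ℝ (dchain u (v :: vs)) z 1
            + J (u z) (fderiv ℝ (dchain u (v :: vs)) z Complex.I))
          + (fderiv ℝ (fun y => J (u y)) z v) (dchain u (Complex.I :: vs) z))
        (fun z => fderiv ℝ
          (fun y => fderiv ℝ (dchain u vs) y 1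
            + J (u y) (fderiv ℝ (dchain u vs) y Complex.I)) z v) s := by
      intro z hz
      have hzn := hs.mem_nhds hz
      have hdW' : DifferentiableAt ℝ (fderiv ℝ (dchain u vs)) z :=
        (hW'.contDiffAt hzn).differentiableAt (by simp)
      have hdA1 : DifferentiableAt ℝ (fun y => fderiv ℝ (dchain u vs) y 1) z :=
        hdW'.clm_apply (differentiableAt_const 1)
      have hdAI : DifferentiableAt ℝ (fun y => fderiv ℝ (dchain u vs) y Complex.I) z :=
        hdW'.clm_apply (differentiableAt_const Complex.I)
      have hdJu : DifferentiableAt ℝ (fun y => J (u y)) z :=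
        (hJs.contDiffAt hzn).differentiableAt (by simp)
      have hdB : DifferentiableAt ℝ
          (fun y => J (u y) (fderiv ℝ (dchain u vs) y Complex.I)) z :=
        hdJu.clm_apply hdAI
      have hsplit : fderiv ℝ
          (fun y => fderiv ℝ (dchain u vs) y 1
            + J (u y) (fderiv ℝ (dchain u vs) y Complex.I)) z
          = fderiv ℝ (fun y => fderiv ℝ (dchain u vs) y 1) z
            + fderiv ℝ (fun y => J (u y) (fderiv ℝ (dchain u vs) y Complex.I)) z :=
        fderiv_add hdA1 hdB
      have hprod : fderiv ℝ (fun y => J (u y) (fderiv ℝ (dchain u vs) y Complex.I)) z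
          = (J (u z)).comp (fderiv ℝ (fun y => fderiv ℝ (dchain u vs) y Complex.I) z)
            + (fderiv ℝ (fun y => J (u y)) z).flip
                (fderiv ℝ (dchain u vs) z Complex.I) :=
        fderiv_clm_apply hdJu hdAI
      show (fderiv ℝ (dchain u (v :: vs)) z 1
            + J (u z) (fderiv ℝ (dchain u (v :: vs)) z Complex.I))
          + (fderiv ℝ (fun y => J (u y)) z v) (dchain u (Complex.I :: vs) z)
        = fderiv ℝ (fun y => fderiv ℝ (dchain u vs) y 1
            + J (u y) (fderiv ℝ (dchain u vs) y Complex.I)) z v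
      rw [hsplit]
      simp only [ContinuousLinearMap.add_apply, ContinuousLinearMap.coe_comp',
        Function.comp_apply, hprod, ContinuousLinearMap.flip_apply]
      rw [dchain_cons]
      rw [stepA v 1 z hz, stepA v Complex.I z hz]
      rw [dchain_cons]
      abel
    -- smoothness of the pieces
    have hGs : ContDiffOn ℝ (⊤ : ℕ∞)
        (fun z => fderiv ℝ (dchain u (v :: vs)) z 1
          + J (u z) (fderiv ℝ (dchain u (v :: vs)) z Complex.I)) s := by
      have hWv' : ContDiffOn ℝ (⊤ : ℕ∞) (fderiv ℝ (dchain u (v :: vs))) s :=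
        ((contDiffOn_infty_iff_fderiv_of_isOpen hs).1 (dchain_smooth hs hu (v :: vs))).2
      exact (hWv'.clm_apply contDiffOn_const).add
        (hJs.clm_apply (hWv'.clm_apply contDiffOn_const))
    have hterm2s : ContDiffOn ℝ (⊤ : ℕ∞)
        (fun z => (fderiv ℝ (fun y => J (u y)) z v) (dchain u (Complex.I :: vs) z)) s :=
      hcterm.clm_apply hAI
    -- derivative of ψ in direction v has vanishing j-th derivative (by IH)
    have h1 : iteratedFDeriv ℝ j
        (fun z => fderiv ℝ
          (fun y => fderiv ℝ (dchain u vs) y 1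
            + J (u y) (fderiv ℝ (dchain u vs) y Complex.I)) z v) 0 = 0 := by
      ext m
      rw [stepIter hs hψ h0 j v m, ih (j + 1) (by omega)]
      simp
    -- second term has vanishing j-th derivative (Leibniz lemma)
    have h2 : iteratedFDeriv ℝ j
        (fun z => (fderiv ℝ (fun y => J (u y)) z v) (dchain u (Complex.I :: vs) z)) 0
        = 0 := by
      apply clmApplyJetZero hs h0 j (fun z => fderiv ℝ (fun y => J (u y)) z v)
        (dchain u (Complex.I :: vs)) hcterm hAI
      intro i hi
      exact dchain_jets hs h0 hu hjet (Complex.I :: vs) i (by simp; omega) (by simp; omega)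
    -- combine
    refine ContinuousMultilinearMap.ext fun m => ?_
    have hsum : iteratedFDeriv ℝ j
        (fun z => (fderiv ℝ (dchain u (v :: vs)) z 1
            + J (u z) (fderiv ℝ (dchain u (v :: vs)) z Complex.I))
          + (fderiv ℝ (fun y => J (u y)) z v) (dchain u (Complex.I :: vs) z)) 0 m
        = iteratedFDeriv ℝ j
            (fun z => fderiv ℝ (dchain u (v :: vs)) z 1
              + J (u z) (fderiv ℝ (dchain u (v :: vs)) z Complex.I)) 0 m
          + iteratedFDeriv ℝ j
              (fun z => (fderiv ℝ (fun y => J (u y)) z v)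
                (dchain u (Complex.I :: vs) z)) 0 m := by
      rw [← iteratedFDerivWithin_of_isOpen j hs h0
            (f := fun z => (fderiv ℝ (dchain u (v :: vs)) z 1
                + J (u z) (fderiv ℝ (dchain u (v :: vs)) z Complex.I))
              + (fderiv ℝ (fun y => J (u y)) z v) (dchain u (Complex.I :: vs) z)),
          ← iteratedFDerivWithin_of_isOpen j hs h0
            (f := fun z => fderiv ℝ (dchain u (v :: vs)) z 1
              + J (u z) (fderiv ℝ (dchain u (v :: vs)) z Complex.I)),
          ← iteratedFDerivWithin_of_isOpen j hs h0
            (f := fun z => (fderiv ℝ (fun y => J (u y)) z v)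
              (dchain u (Complex.I :: vs) z)),
          iteratedFDerivWithin_add_apply' (hGs.of_le (natCast_le_infty j) 0 h0)
            (hterm2s.of_le (natCast_le_infty j) 0 h0) hs.uniqueDiffOn h0]
      rfl
    have hcongr : iteratedFDeriv ℝ j
        (fun z => (fderiv ℝ (dchain u (v :: vs)) z 1
            + J (u z) (fderiv ℝ (dchain u (v :: vs)) z Complex.I))
          + (fderiv ℝ (fun y => J (u y)) z v) (dchain u (Complex.I :: vs) z)) 0
        = iteratedFDeriv ℝ j
            (fun z => fderiv ℝ
              (fun y => fderiv ℝ (dchain u vs) y 1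
                + J (u y) (fderiv ℝ (dchain u vs) y Complex.I)) z v) 0 := by
      rw [← iteratedFDerivWithin_of_isOpen j hs h0, iteratedFDerivWithin_congr heqG h0,
        iteratedFDerivWithin_of_isOpen j hs h0]
    have := congrFun (congrArg DFunLike.coe hcongr) m
    rw [hsum, h1, h2] at this
    simpa using this

set_option maxHeartbeats 4000000 in
lemma cLin (hs : IsOpen s) (h0 : (0 : ℂ) ∈ s) (hu : ContDiffOn ℝ (⊤ : ℕ∞) u s)
    (hJs : ContDiffOn ℝ (⊤ : ℕ∞) (fun z => J (u z)) s)
    (hJ0 : ∀ v : Fin n → ℂ, J (u 0) v = Complex.I • v)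
    (hCR : ∀ z ∈ s, fderiv ℝ u z 1 + J (u z) (fderiv ℝ u z Complex.I) = 0)
    (hjet : ∀ j : ℕ, 1 ≤ j → j ≤ k → iteratedFDeriv ℝ j u 0 = 0)
    (vs : List ℂ) (q : ℕ) (hq : q + vs.length = k) (m : Fin q → ℂ) :
    iteratedFDeriv ℝ q (dchain u (Complex.I :: vs)) 0 m
      = Complex.I • iteratedFDeriv ℝ q (dchain u ((1 : ℂ) :: vs)) 0 m := by
  have hE := eKey hs h0 hu hJs hCR hjet vs q (by omega)
  have hA1 : ContDiffOn ℝ (⊤ : ℕ∞) (dchain u ((1 : ℂ) :: vs)) s :=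
    dchain_smooth hs hu ((1 : ℂ) :: vs)
  have hAI : ContDiffOn ℝ (⊤ : ℕ∞) (dchain u (Complex.I :: vs)) s :=
    dchain_smooth hs hu (Complex.I :: vs)
  set LI : (Fin n → ℂ) →L[ℝ] (Fin n → ℂ)
    := Complex.I • ContinuousLinearMap.id ℝ (Fin n → ℂ) with hLI
  have hEs : ContDiffOn ℝ (⊤ : ℕ∞) (fun z => J (u z) - LI) s := hJs.sub contDiffOn_const
  have hE0 : (fun z => J (u z) - LI) 0 = 0 := by
    ext w
    simp [hLI, hJ0 w]
  have hLIAs : ContDiffOn ℝ (⊤ : ℕ∞) (fun z => LI (dchain u (Complex.I :: vs) z)) s :=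
    contDiffOn_const.clm_apply hAI
  have hsubAs : ContDiffOn ℝ (⊤ : ℕ∞)
      (fun z => (J (u z) - LI) (dchain u (Complex.I :: vs) z)) s :=
    hEs.clm_apply hAI
  have hJAs : ContDiffOn ℝ (⊤ : ℕ∞)
      (fun z => J (u z) (dchain u (Complex.I :: vs) z)) s :=
    hJs.clm_apply hAI
  -- rewrite hE into a three-term sum
  have hfun : (fun z => fderiv ℝ (dchain u vs) z 1
        + J (u z) (fderiv ℝ (dchain u vs) z Complex.I))
      = (fun z => dchain u ((1 : ℂ) :: vs) z
          + ((J (u z) - LI) (dchain u (Complex.I :: vs) z)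
            + LI (dchain u (Complex.I :: vs) z))) := by
    funext z
    rw [dchain_cons, dchain_cons]
    simp [ContinuousLinearMap.sub_apply]
  rw [hfun] at hE
  -- split the sums
  have split1 : iteratedFDeriv ℝ q
      (fun z => dchain u ((1 : ℂ) :: vs) z
        + ((J (u z) - LI) (dchain u (Complex.I :: vs) z)
          + LI (dchain u (Complex.I :: vs) z))) 0 m
      = iteratedFDeriv ℝ q (dchain u ((1 : ℂ) :: vs)) 0 m
        + iteratedFDeriv ℝ q
            (fun z => (J (u z) - LI) (dchain u (Complex.I :: vs) z)
              + LI (dchain u (Complex.I :: vs) z)) 0 m := by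
    rw [← iteratedFDerivWithin_of_isOpen q hs h0
          (f := fun z => dchain u ((1 : ℂ) :: vs) z
            + ((J (u z) - LI) (dchain u (Complex.I :: vs) z)
              + LI (dchain u (Complex.I :: vs) z))),
        ← iteratedFDerivWithin_of_isOpen q hs h0 (f := dchain u ((1 : ℂ) :: vs)),
        ← iteratedFDerivWithin_of_isOpen q hs h0
          (f := fun z => (J (u z) - LI) (dchain u (Complex.I :: vs) z)
            + LI (dchain u (Complex.I :: vs) z)),
        iteratedFDerivWithin_add_apply' (hA1.of_le (natCast_le_infty q) 0 h0)
          ((hsubAs.add hLIAs).of_le (natCast_le_infty q) 0 h0) hs.uniqueDiffOn h0]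
    rfl
  have split2 : iteratedFDeriv ℝ q
      (fun z => (J (u z) - LI) (dchain u (Complex.I :: vs) z)
        + LI (dchain u (Complex.I :: vs) z)) 0 m
      = iteratedFDeriv ℝ q
          (fun z => (J (u z) - LI) (dchain u (Complex.I :: vs) z)) 0 m
        + iteratedFDeriv ℝ q (fun z => LI (dchain u (Complex.I :: vs) z)) 0 m := by
    rw [← iteratedFDerivWithin_of_isOpen q hs h0
          (f := fun z => (J (u z) - LI) (dchain u (Complex.I :: vs) z)
            + LI (dchain u (Complex.I :: vs) z)),
        ← iteratedFDerivWithin_of_isOpen q hs h0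
          (f := fun z => (J (u z) - LI) (dchain u (Complex.I :: vs) z)),
        ← iteratedFDerivWithin_of_isOpen q hs h0
          (f := fun z => LI (dchain u (Complex.I :: vs) z)),
        iteratedFDerivWithin_add_apply' (hsubAs.of_le (natCast_le_infty q) 0 h0)
          (hLIAs.of_le (natCast_le_infty q) 0 h0) hs.uniqueDiffOn h0]
    rfl
  have hzero : iteratedFDeriv ℝ q
      (fun z => (J (u z) - LI) (dchain u (Complex.I :: vs) z)) 0 = 0 := by
    apply clmApplyJetZero' hs h0 q (fun z => J (u z) - LI)
      (dchain u (Complex.I :: vs)) hEs hAI hE0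
    intro i hi
    exact dchain_jets hs h0 hu hjet (Complex.I :: vs) i (by simp; omega) (by simp; omega)
  have hLIt : iteratedFDeriv ℝ q (fun z => LI (dchain u (Complex.I :: vs) z)) 0 m
      = Complex.I • iteratedFDeriv ℝ q (dchain u (Complex.I :: vs)) 0 m := by
    rw [compLeftIter hs LI hAI h0 q]
    simp [hLI]
  have hEm : iteratedFDeriv ℝ q
      (fun z => dchain u ((1 : ℂ) :: vs) z
        + ((J (u z) - LI) (dchain u (Complex.I :: vs) z)
          + LI (dchain u (Complex.I :: vs) z))) 0 m = 0 := by
    rw [hE]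
    rfl
  rw [split1, split2, hzero, hLIt] at hEm
  simp only [ContinuousMultilinearMap.zero_apply, zero_add] at hEm
  -- hEm : X + I • Y = 0 with X the (1::vs) term, Y the (I::vs) term
  have hX : iteratedFDeriv ℝ q (dchain u ((1 : ℂ) :: vs)) 0 m
      = -(Complex.I • iteratedFDeriv ℝ q (dchain u (Complex.I :: vs)) 0 m) :=
    eq_neg_of_add_eq_zero_left hEm
  calc iteratedFDeriv ℝ q (dchain u (Complex.I :: vs)) 0 m
      = -((Complex.I * Complex.I) • iteratedFDeriv ℝ q (dchain u (Complex.I :: vs)) 0 m) := by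
        rw [Complex.I_mul_I]
        simp
    _ = Complex.I • -(Complex.I • iteratedFDeriv ℝ q (dchain u (Complex.I :: vs)) 0 m) := by
        rw [smul_neg, smul_smul]
    _ = Complex.I • iteratedFDeriv ℝ q (dchain u ((1 : ℂ) :: vs)) 0 m := by rw [← hX]

lemma snoc_const_one (q : ℕ) :
    (Fin.snoc (fun _ : Fin q => (1 : ℂ)) (1 : ℂ)) = fun _ : Fin (q + 1) => (1 : ℂ) := by
  funext i
  refine Fin.lastCases ?_ (fun j => ?_) i
  · simp
  · simp

lemma allOnes (hs : IsOpen s) (h0 : (0 : ℂ) ∈ s) (hu : ContDiffOn ℝ (⊤ : ℕ∞) u s) :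
    ∀ (j q : ℕ), q + j = k + 1 →
      iteratedFDeriv ℝ q (dchain u (List.replicate j (1 : ℂ))) 0 (fun _ => (1 : ℂ))
        = iteratedFDeriv ℝ (k + 1) u 0 (fun _ => (1 : ℂ))
  | 0, q, h => by
    obtain rfl : q = k + 1 := by omega
    rfl
  | j + 1, q, h => by
    rw [List.replicate_succ, dchain_cons,
      stepIter hs (dchain_smooth hs hu (List.replicate j (1 : ℂ))) h0 q 1 (fun _ => 1),
      snoc_const_one q, allOnes hs h0 hu j (q + 1) (by omega)]

lemma scaleOnes (hs : IsOpen s) (h0 : (0 : ℂ) ∈ s) (hu : ContDiffOn ℝ (⊤ : ℕ∞) u s)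
    (hJs : ContDiffOn ℝ (⊤ : ℕ∞) (fun z => J (u z)) s)
    (hJ0 : ∀ v : Fin n → ℂ, J (u 0) v = Complex.I • v)
    (hCR : ∀ z ∈ s, fderiv ℝ u z 1 + J (u z) (fderiv ℝ u z Complex.I) = 0)
    (hjet : ∀ j : ℕ, 1 ≤ j → j ≤ k → iteratedFDeriv ℝ j u 0 = 0) :
    ∀ (vs : List ℂ) (q : ℕ), q + vs.length = k + 1 →
      (∀ a ∈ vs, a = 1 ∨ a = Complex.I) → ∀ m : Fin q → ℂ,
      iteratedFDeriv ℝ q (dchain u vs) 0 m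
        = vs.prod • iteratedFDeriv ℝ q (dchain u (List.replicate vs.length (1 : ℂ))) 0 m
  | [], q, hq, hvs, m => by simp
  | v :: vs, q, hq, hvs, m => by
    simp only [List.length_cons] at hq
    have hones : iteratedFDeriv ℝ q (dchain u ((1 : ℂ) :: vs)) 0 m
        = vs.prod • iteratedFDeriv ℝ q
            (dchain u ((1 : ℂ) :: List.replicate vs.length (1 : ℂ))) 0 m := by
      rw [dchain_cons, stepIter hs (dchain_smooth hs hu vs) h0 q 1 m,
        scaleOnes hs h0 hu hJs hJ0 hCR hjet vs (q + 1) (by omega)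
          (fun a ha => hvs a (List.mem_cons_of_mem v ha)) (Fin.snoc m 1),
        dchain_cons,
        stepIter hs (dchain_smooth hs hu (List.replicate vs.length (1 : ℂ))) h0 q 1 m]
    rcases hvs v List.mem_cons_self with hv | hv
    · subst hv
      rw [hones, List.prod_cons, List.length_cons, List.replicate_succ, one_mul]
    · subst hv
      rw [cLin hs h0 hu hJs hJ0 hCR hjet vs q (by omega) m, hones, List.prod_cons,
        List.length_cons, List.replicate_succ, smul_smul]

lemma mainInd (hs : IsOpen s) (h0 : (0 : ℂ) ∈ s) (hu : ContDiffOn ℝ (⊤ : ℕ∞) u s)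
    (hJs : ContDiffOn ℝ (⊤ : ℕ∞) (fun z => J (u z)) s)
    (hJ0 : ∀ v : Fin n → ℂ, J (u 0) v = Complex.I • v)
    (hCR : ∀ z ∈ s, fderiv ℝ u z 1 + J (u z) (fderiv ℝ u z Complex.I) = 0)
    (hjet : ∀ j : ℕ, 1 ≤ j → j ≤ k → iteratedFDeriv ℝ j u 0 = 0) :
    ∀ (N : ℕ) (vs : List ℂ), N + vs.length = k + 1 →
      (∀ a ∈ vs, a = 1 ∨ a = Complex.I) → ∀ m : Fin N → ℂ,
      (∀ i, m i = 1 ∨ m i = Complex.I) →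
      iteratedFDeriv ℝ N (dchain u vs) 0 m
        = ((∏ i, m i) * vs.prod) • iteratedFDeriv ℝ (k + 1) u 0 (fun _ => (1 : ℂ)) := by
  intro N
  induction N with
  | zero =>
    intro vs hlen hvs m _
    rw [scaleOnes (k := k) hs h0 hu hJs hJ0 hCR hjet vs 0 (by omega) hvs m]
    have hm : m = fun _ : Fin 0 => (1 : ℂ) := funext fun i => i.elim0
    subst hm
    rw [allOnes (k := k) hs h0 hu vs.length 0 (by omega)]
    simp
  | succ N ih =>
    intro vs hlen hvs m hm
    rw [← Fin.snoc_init_self m,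
      ← stepIter hs (dchain_smooth hs hu vs) h0 N (m (Fin.last N)) (Fin.init m),
      ← dchain_cons,
      ih ((m (Fin.last N)) :: vs) (by simp at hlen ⊢; omega)
        (fun a ha => by
          rcases List.mem_cons.1 ha with h | h
          · rw [h]; exact hm (Fin.last N)
          · exact hvs a h)
        (Fin.init m) (fun i => hm _)]
    rw [Fin.prod_snoc, List.prod_cons]
    congr 1
    ring

end main

theorem jet_vanishes_iff_holomorphic_part_vanishes (n k : ℕ)
    (J : (Fin n → ℂ) → ((Fin n → ℂ) →L[ℝ] (Fin n → ℂ))) (hJ : ContDiff ℝ (⊤ : ℕ∞) J)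
    (u : ℂ → (Fin n → ℂ)) (U : Set ℂ) (hU : U ∈ nhds (0 : ℂ))
    (hu : ContDiffOn ℝ (⊤ : ℕ∞) u U)
    (hJ0 : ∀ v : Fin n → ℂ, J (u 0) v = Complex.I • v)
    (hCR : ∀ z ∈ U, fderiv ℝ u z 1 + J (u z) (fderiv ℝ u z Complex.I) = 0)
    (hjet : ∀ j : ℕ, 1 ≤ j → j ≤ k → iteratedFDeriv ℝ j u 0 = 0) :
    iteratedFDeriv ℝ (k + 1) u 0 = 0 ↔
      iteratedFDeriv ℝ (k + 1) u 0 (fun _ : Fin (k + 1) => (1 : ℂ)) = 0 := by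
  constructor
  · intro h
    rw [h]
    rfl
  · intro h
    set s : Set ℂ := interior U with hsdef
    have hs : IsOpen s := isOpen_interior
    have h0 : (0 : ℂ) ∈ s := mem_interior_iff_mem_nhds.2 hU
    have hu' : ContDiffOn ℝ (⊤ : ℕ∞) u s := (hu.of_le (by simp)).mono interior_subset
    have hJs : ContDiffOn ℝ (⊤ : ℕ∞) (fun z => J (u z)) s :=
      (hJ.of_le (by simp)).comp_contDiffOn hu'
    have hCR' : ∀ z ∈ s, fderiv ℝ u z 1 + J (u z) (fderiv ℝ u z Complex.I) = 0 :=
      fun z hz => hCR z (interior_subset hz)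
    have hbase : ∀ jj : Fin 2,
        Complex.basisOneI jj = 1 ∨ Complex.basisOneI jj = Complex.I := by
      intro jj
      fin_cases jj
      · left; simp [Complex.coe_basisOneI]
      · right; simp [Complex.coe_basisOneI]
    apply ContinuousMultilinearMap.toMultilinearMap_injective
    apply Module.Basis.ext_multilinear (fun _ => Complex.basisOneI)
    intro v
    have hmain := mainInd (k := k) hs h0 hu' hJs hJ0 hCR' hjet (k + 1) [] (by simp)
      (by simp) (fun i => Complex.basisOneI (v i)) (fun i => hbase (v i))
    simp only [dchain_nil, List.prod_nil, mul_one] at hmain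
    show iteratedFDeriv ℝ (k + 1) u 0 (fun i => Complex.basisOneI (v i)) = _
    rw [hmain, h]
    simp
end

section
/- Let F, G, H be real Banach spaces, let E : F → (G →L[ℝ] H) be a smooth map, let u : ℝ² → F and ξ : ℝ² → G be smooth maps, and let z₀ ∈ ℝ². Assume E(u z₀) = 0 and iteratedFDeriv ℝ j u z₀ = 0 for all 1 ≤ j ≤ n. Then iteratedFDeriv ℝ k (fun z => E (u z) (ξ z)) z₀ = 0 for all 0 ≤ k ≤ n. -/
set_option maxSynthPendingDepth 3
set_option synthInstance.maxHeartbeats 400000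
set_option maxHeartbeats 1000000

open ContinuousLinearMap

/-- `n`-th derivative of `fderiv` vanishes iff the `n+1`-st derivative vanishes. -/
private lemma iteratedFDeriv_fderiv_eq_zero {X Y : Type*}
    [NormedAddCommGroup X] [NormedSpace ℝ X]
    [NormedAddCommGroup Y] [NormedSpace ℝ Y]
    {f : X → Y} {x : X} {m : ℕ}
    (h : iteratedFDeriv ℝ (m + 1) f x = 0) :
    iteratedFDeriv ℝ m (fderiv ℝ f) x = 0 := by
  have := iteratedFDeriv_succ_eq_comp_right (𝕜 := ℝ) (f := f) (x := x) (n := m)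
  rw [h] at this
  have h2 := congrArg (continuousMultilinearCurryRightEquiv' ℝ m X Y) this.symm
  simpa using h2

/-- Leibniz-type vanishing: if all derivatives of `h` up to order `k` vanish at `z₀`,
then the `k`-th derivative of `z ↦ c z (h z)` vanishes at `z₀`. -/
private lemma clm_apply_jets_vanish (z₀ : ℝ × ℝ) :
    ∀ (k : ℕ) {W₂ W₃ : Type*}
    [NormedAddCommGroup W₂] [NormedSpace ℝ W₂]
    [NormedAddCommGroup W₃] [NormedSpace ℝ W₃]
    (c : ℝ × ℝ → (W₂ →L[ℝ] W₃)) (h : ℝ × ℝ → W₂),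
    ContDiff ℝ (⊤ : ℕ∞) c → ContDiff ℝ (⊤ : ℕ∞) h →
    (∀ i : ℕ, i ≤ k → iteratedFDeriv ℝ i h z₀ = 0) →
    iteratedFDeriv ℝ k (fun z => c z (h z)) z₀ = 0 := by
  intro k
  induction k with
  | zero =>
    intro W₂ W₃ _ _ _ _ c h hc hh hjet
    have h0 : h z₀ = 0 := by
      have := hjet 0 le_rfl
      have := congrFun (congrArg DFunLike.coe this) (fun _ => 0)
      simpa using this
    ext m
    simp [h0]
  | succ k ih =>
    intro W₂ W₃ _ _ _ _ c h hc hh hjet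
    rw [iteratedFDeriv_succ_eq_comp_right]
    simp only [Function.comp_apply]
    have heq : (fderiv ℝ fun z => c z (h z)) =
        fun x => (compL ℝ (ℝ × ℝ) W₂ W₃ (c x)) (fderiv ℝ h x)
          + ((flipₗᵢ ℝ (ℝ × ℝ) W₂ W₃ (fderiv ℝ c x))) (h x) := by
      funext x
      rw [fderiv_clm_apply (hc.differentiable (by simp) x)
        (hh.differentiable (by simp) x)]
      rfl
    rw [heq]
    have hc1 : ContDiff ℝ (⊤ : ℕ∞) fun x => compL ℝ (ℝ × ℝ) W₂ W₃ (c x) :=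
      hc.continuousLinearMap_comp (compL ℝ (ℝ × ℝ) W₂ W₃)
    have hh1 : ContDiff ℝ (⊤ : ℕ∞) (fderiv ℝ h) := hh.fderiv_right (by simp)
    have hc2 : ContDiff ℝ (⊤ : ℕ∞) fun x => (flipₗᵢ ℝ (ℝ × ℝ) W₂ W₃) (fderiv ℝ c x) :=
      (hc.fderiv_right (by simp)).continuousLinearMap_comp
        (flipₗᵢ ℝ (ℝ × ℝ) W₂ W₃).toContinuousLinearEquiv.toContinuousLinearMap
    have hterm1 : iteratedFDeriv ℝ k
        (fun x => (compL ℝ (ℝ × ℝ) W₂ W₃ (c x)) (fderiv ℝ h x)) z₀ = 0 := by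
      refine ih _ _ hc1 hh1 fun i hi => ?_
      exact iteratedFDeriv_fderiv_eq_zero (hjet (i + 1) (by omega))
    have hterm2 : iteratedFDeriv ℝ k
        (fun x => ((flipₗᵢ ℝ (ℝ × ℝ) W₂ W₃) (fderiv ℝ c x)) (h x)) z₀ = 0 := by
      refine ih _ _ hc2 hh fun i hi => hjet i (by omega)
    have hsum := iteratedFDeriv_add_apply' (𝕜 := ℝ) (i := k) (x := z₀)
      ((hc1.clm_apply hh1).of_le (by exact_mod_cast le_top)).contDiffAt
      ((hc2.clm_apply hh).of_le (by exact_mod_cast le_top)).contDiffAt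
    rw [hsum, hterm1, hterm2, add_zero]
    exact (continuousMultilinearCurryRightEquiv' ℝ k (ℝ × ℝ) W₃).symm.map_zero

theorem zeroth_order_term_jets_vanish
    {F G H : Type*}
    [NormedAddCommGroup F] [NormedSpace ℝ F] [CompleteSpace F]
    [NormedAddCommGroup G] [NormedSpace ℝ G] [CompleteSpace G]
    [NormedAddCommGroup H] [NormedSpace ℝ H] [CompleteSpace H]
    (E : F → (G →L[ℝ] H)) (hE : ContDiff ℝ (⊤ : ℕ∞) E)
    (u : ℝ × ℝ → F) (hu : ContDiff ℝ (⊤ : ℕ∞) u)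
    (ξ : ℝ × ℝ → G) (hξ : ContDiff ℝ (⊤ : ℕ∞) ξ)
    (z₀ : ℝ × ℝ) (n : ℕ)
    (hE0 : E (u z₀) = 0)
    (hjet : ∀ j : ℕ, 1 ≤ j → j ≤ n → iteratedFDeriv ℝ j u z₀ = 0) :
    ∀ k : ℕ, k ≤ n → iteratedFDeriv ℝ k (fun z => E (u z) (ξ z)) z₀ = 0 := by
  -- Step 1: all derivatives of E ∘ u up to order n vanish at z₀.
  have hEu : ContDiff ℝ (⊤ : ℕ∞) fun z => E (u z) := hE.comp hu
  have step1 : ∀ j : ℕ, j ≤ n → iteratedFDeriv ℝ j (fun z => E (u z)) z₀ = 0 := by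
    intro j hj
    match j with
    | 0 => ext m; simp [hE0]
    | (j + 1) =>
      rw [iteratedFDeriv_succ_eq_comp_right]
      simp only [Function.comp_apply]
      have heq : (fderiv ℝ fun z => E (u z)) =
          fun x => (compL ℝ (ℝ × ℝ) F (G →L[ℝ] H) ((fderiv ℝ E) (u x))) (fderiv ℝ u x) := by
        funext x
        rw [show (fun z => E (u z)) = E ∘ u from rfl,
          fderiv_comp x (hE.differentiable (by simp) (u x)) (hu.differentiable (by simp) x)]
        rfl
      rw [heq]
      have hc : ContDiff ℝ (⊤ : ℕ∞) fun x => compL ℝ (ℝ × ℝ) F (G →L[ℝ] H) ((fderiv ℝ E) (u x)) :=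
        ((hE.fderiv_right (by simp)).comp hu).continuousLinearMap_comp
          (compL ℝ (ℝ × ℝ) F (G →L[ℝ] H))
      have hvanish : ∀ i : ℕ, i ≤ j → iteratedFDeriv ℝ i (fderiv ℝ u) z₀ = 0 := fun i hi =>
        iteratedFDeriv_fderiv_eq_zero (hjet (i + 1) (by omega) (by omega))
      have := clm_apply_jets_vanish z₀ j _ _ hc (hu.fderiv_right (by simp)) hvanish
      rw [this]
      exact LinearIsometryEquiv.map_zero _
  -- Step 2: Leibniz with the vanishing factor E ∘ u.
  intro k hk
  have hc : ContDiff ℝ (⊤ : ℕ∞) fun z => ContinuousLinearMap.apply ℝ H (ξ z) :=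
    hξ.continuousLinearMap_comp (ContinuousLinearMap.apply ℝ H (E := G))
  exact clm_apply_jets_vanish z₀ k (fun z => ContinuousLinearMap.apply ℝ H (ξ z))
    (fun z => E (u z)) hc hEu fun i hi => step1 i (le_trans hi hk)
end

section
/- Let F, G, H be real Banach spaces, let B : F → ((ℝ² →L[ℝ] F) →L[ℝ] (G →L[ℝ] H)) be a smooth map, let u : ℝ² → F and ξ : ℝ² → G be smooth maps, and let z₀ ∈ ℝ². Assume n ≥ 1 and iteratedFDeriv ℝ j u z₀ = 0 for all 1 ≤ j ≤ n. Then iteratedFDeriv ℝ k (fun z => B (u z) (fderiv ℝ u z) (ξ z)) z₀ = 0 for all 0 ≤ k ≤ n − 1. -/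
theorem torsion_term_jets_vanish
    {F G H : Type*}
    [NormedAddCommGroup F] [NormedSpace ℝ F] [CompleteSpace F]
    [NormedAddCommGroup G] [NormedSpace ℝ G] [CompleteSpace G]
    [NormedAddCommGroup H] [NormedSpace ℝ H] [CompleteSpace H]
    (B : F → ((ℝ × ℝ →L[ℝ] F) →L[ℝ] (G →L[ℝ] H))) (hB : ContDiff ℝ (⊤ : ℕ∞) B)
    (u : ℝ × ℝ → F) (hu : ContDiff ℝ (⊤ : ℕ∞) u)
    (ξ : ℝ × ℝ → G) (hξ : ContDiff ℝ (⊤ : ℕ∞) ξ)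
    (z₀ : ℝ × ℝ) (n : ℕ) (hn : 1 ≤ n)
    (hjet : ∀ j : ℕ, 1 ≤ j → j ≤ n → iteratedFDeriv ℝ j u z₀ = 0) :
    ∀ k : ℕ, k ≤ n - 1 →
      iteratedFDeriv ℝ k (fun z => B (u z) (fderiv ℝ u z) (ξ z)) z₀ = 0 := by
  intro k hk
  have hBu : ContDiff ℝ (⊤ : ℕ∞) (fun z => B (u z)) := hB.comp hu
  have hdu : ContDiff ℝ (⊤ : ℕ∞) (fderiv ℝ u) := hu.fderiv_right (by simp)
  -- vanishing of the jets of fderiv u at orders ≤ n - 1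
  have hduv : ∀ m : ℕ, m ≤ n - 1 → iteratedFDeriv ℝ m (fderiv ℝ u) z₀ = 0 := by
    intro m hm
    have h1 : ‖iteratedFDeriv ℝ m (fderiv ℝ u) z₀‖ = ‖iteratedFDeriv ℝ (m + 1) u z₀‖ :=
      norm_iteratedFDeriv_fderiv
    have h2 : iteratedFDeriv ℝ (m + 1) u z₀ = 0 :=
      hjet (m + 1) (Nat.le_add_left 1 m) (by omega)
    rw [h2, norm_zero, norm_eq_zero] at h1
    exact h1
  -- the inner map g z = B (u z) (fderiv u z)
  set g : ℝ × ℝ → (G →L[ℝ] H) := fun z => B (u z) (fderiv ℝ u z) with hg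
  have hgcd : ContDiff ℝ (⊤ : ℕ∞) g := hBu.clm_apply hdu
  -- jets of g vanish at orders ≤ n - 1
  have hgv : ∀ m : ℕ, m ≤ n - 1 → iteratedFDeriv ℝ m g z₀ = 0 := by
    intro m hm
    set M := (ContinuousLinearMap.apply ℝ (G →L[ℝ] H)
      (E := (ℝ × ℝ) →L[ℝ] F)).flip with hM
    have hfun : g = fun z => M (B (u z)) (fderiv ℝ u z) := rfl
    have hbound := M.norm_iteratedFDeriv_le_of_bilinear hBu hdu z₀ (n := m) (by exact_mod_cast le_top)
    rw [← hfun] at hbound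
    have hzero : ∀ i ∈ Finset.range (m + 1),
        (m.choose i : ℝ) * ‖iteratedFDeriv ℝ i (fun z => B (u z)) z₀‖ *
          ‖iteratedFDeriv ℝ (m - i) (fderiv ℝ u) z₀‖ = 0 := by
      intro i hi
      rw [hduv (m - i) (le_trans (Nat.sub_le m i) hm), norm_zero, mul_zero]
    rw [Finset.sum_congr rfl hzero, Finset.sum_const, smul_zero, mul_zero] at hbound
    exact norm_le_zero_iff.mp hbound
  -- outer application to ξ
  set M₂ := ContinuousLinearMap.apply ℝ H (E := G) with hM₂
  have hfun2 : (fun z => B (u z) (fderiv ℝ u z) (ξ z)) = fun z => M₂ (ξ z) (g z) := rfl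
  rw [hfun2]
  have hbound := M₂.norm_iteratedFDeriv_le_of_bilinear hξ hgcd z₀ (n := k) (by exact_mod_cast le_top)
  have hzero : ∀ i ∈ Finset.range (k + 1),
      (k.choose i : ℝ) * ‖iteratedFDeriv ℝ i ξ z₀‖ *
        ‖iteratedFDeriv ℝ (k - i) g z₀‖ = 0 := by
    intro i hi
    rw [hgv (k - i) (le_trans (Nat.sub_le k i) hk), norm_zero, mul_zero]
  rw [Finset.sum_congr rfl hzero, Finset.sum_const, smul_zero, mul_zero] at hbound
  exact norm_le_zero_iff.mp hbound
end

section
/- Identify ℝ² with ℂ (with basis e₁ = 1, e₂ = i) and let F = ℂⁿ regarded as a real normed space. Let J : F → (F →L[ℝ] F) be smooth with J(u z₀) equal to scalar multiplication by i, let u, ξ : ℝ² → F be smooth, and assume iteratedFDeriv ℝ j u z₀ = 0 for all 1 ≤ j ≤ n, where n ≥ 1. Define Lξ(z) = fderiv ℝ ξ z e₁ + J(u z)(fderiv ℝ ξ z e₂) + (fderiv ℝ J (u z) (ξ z))(fderiv ℝ u z e₂) and ∂̄ξ(z) = fderiv ℝ ξ z e₁ + i • (fderiv ℝ ξ z e₂).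 Then iteratedFDeriv ℝ k (Lξ − ∂̄ξ) z₀ = 0 for all 0 ≤ k ≤ n − 1. -/
open Complex

section aux

variable {E F G H : Type*} [NormedAddCommGroup E] [NormedSpace ℝ E]
  [NormedAddCommGroup F] [NormedSpace ℝ F]
  [NormedAddCommGroup G] [NormedSpace ℝ G]
  [NormedAddCommGroup H] [NormedSpace ℝ H]

lemma bilin_vanish (B : F →L[ℝ] G →L[ℝ] H) {f : E → F} {g : E → G}
    (hf : ContDiff ℝ (⊤ : ℕ∞) f) (hg : ContDiff ℝ (⊤ : ℕ∞) g) (x : E) {k : ℕ}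
    (h : ∀ i ≤ k, iteratedFDeriv ℝ i f x = 0) :
    iteratedFDeriv ℝ k (fun z => B (f z) (g z)) x = 0 := by
  have hb := B.norm_iteratedFDeriv_le_of_bilinear hf hg x (n := k) (by exact_mod_cast le_top)
  have hz : ∀ i ∈ Finset.range (k + 1),
      (k.choose i : ℝ) * ‖iteratedFDeriv ℝ i f x‖ * ‖iteratedFDeriv ℝ (k - i) g x‖ = 0 := by
    intro i hi
    rw [h i (Nat.lt_succ_iff.mp (Finset.mem_range.mp hi))]
    simp
  rw [Finset.sum_congr rfl hz] at hb
  simpa using norm_le_zero_iff.mp (by simpa using hb)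

lemma fderiv_jet {u : E → F} {x : E} {i : ℕ}
    (h : iteratedFDeriv ℝ (i + 1) u x = 0) :
    iteratedFDeriv ℝ i (fderiv ℝ u) x = 0 := by
  have := norm_iteratedFDeriv_fderiv (𝕜 := ℝ) (f := u) (x := x) (n := i)
  rw [h] at this
  simpa using norm_eq_zero.mp (by simpa using this)

lemma comp_jet {J : F → G} (hJ : ContDiff ℝ (⊤ : ℕ∞) J) {u : E → F} (hu : ContDiff ℝ (⊤ : ℕ∞) u)
    {x : E} {n : ℕ} (hjet : ∀ j : ℕ, 1 ≤ j → j ≤ n → iteratedFDeriv ℝ j u x = 0) :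
    ∀ j : ℕ, 1 ≤ j → j ≤ n → iteratedFDeriv ℝ j (fun z => J (u z)) x = 0 := by
  intro j hj1 hjn
  obtain ⟨i, rfl⟩ := Nat.exists_eq_add_of_le hj1
  rw [add_comm] at *
  rw [iteratedFDeriv_succ_eq_comp_right]
  have hd : (fderiv ℝ fun z => J (u z)) = fun z =>
      ((ContinuousLinearMap.compL ℝ E F G).flip (fderiv ℝ u z)) (fderiv ℝ J (u z)) := by
    funext z
    simp only [ContinuousLinearMap.flip_apply, ContinuousLinearMap.compL_apply]
    exact fderiv_comp z (hJ.differentiable (by simp) |>.differentiableAt)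
      (hu.differentiable (by simp) |>.differentiableAt)
  have hg : ContDiff ℝ (⊤ : ℕ∞) (fun z => fderiv ℝ J (u z)) := (hJ.fderiv_right (by simp)).comp hu
  have hb : iteratedFDeriv ℝ i (fun z =>
      ((ContinuousLinearMap.compL ℝ E F G).flip (fderiv ℝ u z)) (fderiv ℝ J (u z))) x = 0 :=
    bilin_vanish _ (hu.fderiv_right (by simp)) hg x
      (fun l hl => fderiv_jet (hjet (l + 1) (Nat.le_add_left 1 l) (by omega)))
  simp only [Function.comp_apply, hd, hb]
  exact (continuousMultilinearCurryRightEquiv' ℝ i E G).symm.map_zero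

end aux

set_option maxHeartbeats 1000000 in
theorem linearized_CR_agrees_with_dbar_to_high_order (m n : ℕ) (hn : 1 ≤ n)
    (J : (Fin m → ℂ) → ((Fin m → ℂ) →L[ℝ] (Fin m → ℂ))) (hJ : ContDiff ℝ (⊤ : ℕ∞) J)
    (u ξ : ℂ → (Fin m → ℂ)) (hu : ContDiff ℝ (⊤ : ℕ∞) u) (hξ : ContDiff ℝ (⊤ : ℕ∞) ξ)
    (z₀ : ℂ)
    (hJ0 : ∀ v : Fin m → ℂ, J (u z₀) v = Complex.I • v)
    (hjet : ∀ j : ℕ, 1 ≤ j → j ≤ n → iteratedFDeriv ℝ j u z₀ = 0) :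
    ∀ k : ℕ, k ≤ n - 1 →
      iteratedFDeriv ℝ k
        ((fun z => fderiv ℝ ξ z 1 + J (u z) (fderiv ℝ ξ z Complex.I) +
            (fderiv ℝ J (u z) (ξ z)) (fderiv ℝ u z Complex.I)) -
         (fun z => fderiv ℝ ξ z 1 + Complex.I • fderiv ℝ ξ z Complex.I)) z₀ = 0 := by
  intro k hk
  have hfun : ((fun z => fderiv ℝ ξ z 1 + J (u z) (fderiv ℝ ξ z Complex.I) +
            (fderiv ℝ J (u z) (ξ z)) (fderiv ℝ u z Complex.I)) -
         (fun z => fderiv ℝ ξ z 1 + Complex.I • fderiv ℝ ξ z Complex.I))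
      = fun z => (ContinuousLinearMap.apply (E := (Fin m → ℂ)) ℝ (Fin m → ℂ)).flip
            (J (u z) - J (u z₀)) (fderiv ℝ ξ z Complex.I) +
          (ContinuousLinearMap.apply (E := (Fin m → ℂ)) ℝ (Fin m → ℂ))
            (fderiv ℝ u z Complex.I) (fderiv ℝ J (u z) (ξ z)) := by
    funext z
    simp only [Pi.sub_apply, ContinuousLinearMap.flip_apply, ContinuousLinearMap.apply_apply,
      ContinuousLinearMap.sub_apply, ← hJ0]
    abel
  rw [hfun]
  -- smoothness facts
  have hξ' : ContDiff ℝ (⊤ : ℕ∞) (fun z => fderiv ℝ ξ z Complex.I) :=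
    (hξ.fderiv_right (by simp)).clm_apply contDiff_const
  have hJu : ContDiff ℝ (⊤ : ℕ∞) (fun z => J (u z) - J (u z₀)) :=
    (hJ.comp hu).sub contDiff_const
  have hu' : ContDiff ℝ (⊤ : ℕ∞) (fun z => fderiv ℝ u z Complex.I) :=
    (hu.fderiv_right (by simp)).clm_apply contDiff_const
  have hdJ : ContDiff ℝ (⊤ : ℕ∞) (fun z => fderiv ℝ J (u z) (ξ z)) :=
    ((hJ.fderiv_right (by simp)).comp hu).clm_apply hξ
  have h1 : iteratedFDeriv ℝ k
      (fun z => (ContinuousLinearMap.apply (E := (Fin m → ℂ)) ℝ (Fin m → ℂ)).flip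
        (J (u z) - J (u z₀)) (fderiv ℝ ξ z Complex.I)) z₀ = 0 := by
    apply bilin_vanish _ hJu hξ' z₀
    intro i hi
    rcases Nat.eq_zero_or_pos i with h0 | h0
    · subst h0
      ext v
      simp [iteratedFDeriv_zero_apply]
    · have hin : i ≤ n := le_trans hi (le_trans hk (Nat.sub_le n 1))
      have hre : (fun z => J (u z) - J (u z₀)) = fun z => J (u z) + (fun _ : ℂ => -J (u z₀)) z :=
        funext fun z => sub_eq_add_neg _ _
      have hcc : ContDiff ℝ (i : ℕ∞) (fun z => J (u z)) := (hJ.comp hu).of_le (by exact_mod_cast le_top)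
      rw [hre, iteratedFDeriv_add_apply' hcc.contDiffAt contDiff_const.contDiffAt,
        iteratedFDeriv_const_of_ne (Nat.pos_iff_ne_zero.mp h0),
        comp_jet hJ hu hjet i h0 hin]
      simp
  have h2 : iteratedFDeriv ℝ k
      (fun z => (ContinuousLinearMap.apply (E := (Fin m → ℂ)) ℝ (Fin m → ℂ))
        (fderiv ℝ u z Complex.I) (fderiv ℝ J (u z) (ξ z))) z₀ = 0 := by
    apply bilin_vanish _ hu' hdJ z₀
    intro i hi
    have heq : (fun z => fderiv ℝ u z Complex.I)
        = (ContinuousLinearMap.apply (E := ℂ) ℝ (Fin m → ℂ) Complex.I) ∘ (fderiv ℝ u) := rfl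
    rw [heq, ContinuousLinearMap.iteratedFDeriv_comp_left _ (hu.fderiv_right (by simp)).contDiffAt
        (by exact_mod_cast le_top : ((i : ℕ) : WithTop ℕ∞) ≤ ((⊤ : ℕ∞) : WithTop ℕ∞)),
      fderiv_jet (hjet (i + 1) (Nat.le_add_left 1 i) (by omega))]
    ext v
    simp
  have hc1 : ContDiff ℝ (⊤ : ℕ∞) (fun z => (ContinuousLinearMap.apply (E := (Fin m → ℂ)) ℝ (Fin m → ℂ)).flip
      (J (u z) - J (u z₀))) := by
    exact ContDiff.comp (F := (Fin m → ℂ) →L[ℝ] (Fin m → ℂ))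
      (ContinuousLinearMap.apply (E := (Fin m → ℂ)) ℝ (Fin m → ℂ)).flip.contDiff hJu
  have hc2 : ContDiff ℝ (⊤ : ℕ∞) (fun z => (ContinuousLinearMap.apply (E := (Fin m → ℂ)) ℝ (Fin m → ℂ))
      (fderiv ℝ u z Complex.I)) := by
    exact (ContinuousLinearMap.contDiff (E := Fin m → ℂ) _).comp hu'
  have hg1s : ContDiff ℝ (k : ℕ∞) (fun z => (ContinuousLinearMap.apply (E := (Fin m → ℂ)) ℝ (Fin m → ℂ)).flip
      (J (u z) - J (u z₀)) (fderiv ℝ ξ z Complex.I)) := (hc1.clm_apply hξ').of_le (by exact_mod_cast le_top)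
  have hg2s : ContDiff ℝ (k : ℕ∞) (fun z => (ContinuousLinearMap.apply (E := (Fin m → ℂ)) ℝ (Fin m → ℂ))
      (fderiv ℝ u z Complex.I) (fderiv ℝ J (u z) (ξ z))) := (hc2.clm_apply hdJ).of_le (by exact_mod_cast le_top)
  rw [iteratedFDeriv_add_apply' hg1s.contDiffAt hg2s.contDiffAt, h1, h2, add_zero]
end
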